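/- If B ∈ {0,1}^{m×n} with two-class column labels satisfies J(B) = m (where J is the margin criterion with J(B) ≤ m), then (a) all columns within each class are equal, and (b) any two columns from different classes are orthogonal as vectors in ℝ^m, i.e., b_iᵀ b_j = 0 whenever c_i ≠ c_j. -/

import Mathlib

/-!
Every Hamming distance lies in `[0, m]`, so the inter-class average is at most `m` and the
intra-class average is at least `0`. Their difference can only equal `m` if every inter-class
distance is `m` and every intra-class distance is `0`. Two 0/1 vectors at Hamming distance `m`
differ in every coordinate, so in each coordinate one of them vanishes and their dot product is `0`.
-/

open Finset

/-- `‖v‖₀`: number of nonzero entries of a vector. -/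
noncomputable def l0 {m : ℕ} (v : Fin m → ℝ) : ℕ := (univ.filter fun k => v k ≠ 0).card

section L0

variable {m : ℕ}

lemma l0_le (v : Fin m → ℝ) : l0 v ≤ m := by
  simpa [l0] using card_filter_le univ fun k => v k ≠ 0

lemma l0_eq_zero_iff {v : Fin m → ℝ} : l0 v = 0 ↔ v = 0 := by
  simp [l0, filter_eq_empty_iff, funext_iff]

lemma l0_eq_iff {v : Fin m → ℝ} : l0 v = m ↔ ∀ k, v k ≠ 0 := by
  simpa [l0] using card_filter_eq_iff (s := univ) (p := fun k => v k ≠ 0)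

end L0

lemma mul_eq_zero_of_ne_of_mem_zero_one {x y : ℝ} (hx : x = 0 ∨ x = 1) (hy : y = 0 ∨ y = 1)
    (hxy : x ≠ y) : x * y = 0 := by
  rcases hx with rfl | rfl <;> rcases hy with rfl | rfl <;> simp_all

lemma sum_mul_eq_zero_of_l0_sub_eq {m : ℕ} {u v : Fin m → ℝ} (hu : ∀ k, u k = 0 ∨ u k = 1)
    (hv : ∀ k, v k = 0 ∨ v k = 1) (huv : l0 (u - v) = m) : ∑ k, u k * v k = 0 :=
  sum_eq_zero fun k _ =>
    mul_eq_zero_of_ne_of_mem_zero_one (hu k) (hv k) (sub_ne_zero.mp (l0_eq_iff.mp huv k))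

lemma sum_sum_ite_eq_sum_filter {ι M : Type*} [Fintype ι] [AddCommMonoid M]
    (p : ι → ι → Prop) [DecidableRel p] (f : ι → ι → M) :
    ∑ i, ∑ j, (if p i j then f i j else 0) =
      ∑ q ∈ univ.filter (fun q : ι × ι => p q.1 q.2), f q.1 q.2 := by
  rw [sum_filter, ← univ_product_univ, sum_product]

lemma forall_eq_of_average_sub_eq {ι : Type*} {s t : Finset ι} {f : ι → ℝ} {M a : ℝ}
    (hs : s.Nonempty) (ha : 0 < a) (hf_le : ∀ q ∈ s, f q ≤ M)
    (hf_nonneg : ∀ q ∈ t, 0 ≤ f q)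
    (h : (∑ q ∈ s, f q) / #s - (∑ q ∈ t, f q) / a = M) :
    (∀ q ∈ s, f q = M) ∧ ∀ q ∈ t, f q = 0 := by
  have hs' : (0 : ℝ) < #s := by exact_mod_cast hs.card_pos
  have h_avg_le : (∑ q ∈ s, f q) / #s ≤ M := by
    rw [div_le_iff₀ hs', mul_comm, ← nsmul_eq_mul]
    exact sum_le_card_nsmul s f M hf_le
  have h_t_nonneg : 0 ≤ (∑ q ∈ t, f q) / a := div_nonneg (sum_nonneg hf_nonneg) ha.le
  have h_s : ∑ q ∈ s, f q = ∑ _q ∈ s, M := by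
    have : (∑ q ∈ s, f q) / #s = M := by linarith
    rw [div_eq_iff hs'.ne'] at this
    rw [this, sum_const, nsmul_eq_mul, mul_comm]
  have h_t : ∑ q ∈ t, f q = 0 := by
    have : (∑ q ∈ t, f q) / a = 0 := by linarith
    simpa [ha.ne'] using this
  exact ⟨(sum_eq_sum_iff_of_le hf_le).mp h_s, (sum_eq_zero_iff_of_nonneg hf_nonneg).mp h_t⟩

theorem J_eq_m_implies_general {m n : ℕ} (b : Fin n → Fin m → ℝ)
    (hb : ∀ j k, b j k = 0 ∨ b j k = 1) (c : Fin n → Fin 2)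
    (μ₁ μ₂ : ℕ)
    (hμ₁ : μ₁ = (univ.filter fun p : Fin n × Fin n => c p.1 ≠ c p.2).card)
    (hμ₁pos : 0 < μ₁) (hμ₂pos : 0 < μ₂)
    (hJ : (1 / (μ₁ : ℝ)) * ∑ i, ∑ j, (if c i ≠ c j then (l0 (b i - b j) : ℝ) else 0) -
      (1 / (μ₂ : ℝ)) * ∑ i, ∑ j, (if c i = c j then (l0 (b i - b j) : ℝ) else 0) = m) :
    (∀ i j, c i = c j → b i = b j) ∧
      (∀ i j, c i ≠ c j → ∑ k, b i k * b j k = 0) := by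
  subst hμ₁
  rw [sum_sum_ite_eq_sum_filter (fun i j => c i ≠ c j) (fun i j => (l0 (b i - b j) : ℝ)),
    sum_sum_ite_eq_sum_filter (fun i j => c i = c j) (fun i j => (l0 (b i - b j) : ℝ)),
    one_div_mul_eq_div, one_div_mul_eq_div] at hJ
  obtain ⟨h_inter, h_intra⟩ := forall_eq_of_average_sub_eq (card_pos.mp hμ₁pos)
    (by exact_mod_cast hμ₂pos) (fun q _ => Nat.cast_le.mpr (l0_le _))
    (fun q _ => Nat.cast_nonneg _) hJ
  refine ⟨fun i j hc => ?_, fun i j hc => ?_⟩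
  · have hd : l0 (b i - b j) = 0 := Nat.cast_eq_zero.mp (h_intra (i, j) (by simp [hc]))
    exact sub_eq_zero.mp (l0_eq_zero_iff.mp hd)
  · have hd : l0 (b i - b j) = m := Nat.cast_inj.mp (h_inter (i, j) (by simp [hc]))
    exact sum_mul_eq_zero_of_l0_sub_eq (hb i) (hb j) hd

/-- Proposition 2: if the margin criterion attains its maximum `J(B) = m`, then
(a) all columns within each class are equal, and (b) columns from different classes
are orthogonal. -/
theorem J_eq_m_implies {m n : ℕ} (b : Fin n → Fin m → ℝ)
    (hb : ∀ j k, b j k = 0 ∨ b j k = 1) (c : Fin n → Fin 2)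
    (μ₁ μ₂ : ℕ)
    (hμ₁ : μ₁ = (univ.filter fun p : Fin n × Fin n => c p.1 ≠ c p.2).card)
    (hμ₂ : μ₂ = (univ.filter fun p : Fin n × Fin n => c p.1 = c p.2 ∧ p.1 ≠ p.2).card)
    (hμ₁pos : 0 < μ₁) (hμ₂pos : 0 < μ₂)
    (hJ : (1 / (μ₁ : ℝ)) * ∑ i, ∑ j, (if c i ≠ c j then (l0 (b i - b j) : ℝ) else 0) -
      (1 / (μ₂ : ℝ)) * ∑ i, ∑ j, (if c i = c j then (l0 (b i - b j) : ℝ) else 0) = m) :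
    (∀ i j, c i = c j → b i = b j) ∧
      (∀ i j, c i ≠ c j → ∑ k, b i k * b j k = 0) :=
  J_eq_m_implies_general b hb c μ₁ μ₂ hμ₁ hμ₁pos hμ₂pos hJ
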